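/- Let m ≥ 1 and n ≥ m+2 be integers. If d lies on an extreme ray of HMET^m_n, then its vertex-splitting d^{vs} lies on an extreme ray of HMET^m_{n+1}. -/

import Mathlib

/-- `V n` is the vertex set `{1, …, n}`. -/
def V (n : ℕ) : Finset ℕ := Finset.Icc 1 n

/-- `sigmaT d T = Σ_{k ∈ T} d (T \\ {k})`. -/
def sigmaT (d : Finset ℕ → ℝ) (T : Finset ℕ) : ℝ := ∑ k ∈ T, d (T.erase k)

/-- Membership in the cone `HMET m n` of `m`-hemi-metrics: nonnegativity on every
`(m+1)`-subset of `V n`, and the `m`-simplex inequalities. -/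
def inHMET (m n : ℕ) (d : Finset ℕ → ℝ) : Prop :=
  (∀ S ⊆ V n, S.card = m + 1 → 0 ≤ d S) ∧
  (∀ T ⊆ V n, T.card = m + 2 → ∀ i ∈ T, 2 * d (T.erase i) ≤ sigmaT d T)

/-- `d` lies on an extreme ray of the cone `C` (whose members are functions on the finsets
satisfying the predicate `idx`): `d ∈ C`, `d` is nonzero on the relevant index set, and
whenever `d = x + y` with `x, y ∈ C`, both `x` and `y` are nonnegative multiples of `d`
on the relevant index set. -/
def IsExtremeRayOn (C : (Finset ℕ → ℝ) → Prop) (idx : Finset ℕ → Prop)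
    (d : Finset ℕ → ℝ) : Prop :=
  C d ∧ (∃ S, idx S ∧ d S ≠ 0) ∧
  ∀ x y : Finset ℕ → ℝ, C x → C y → (∀ S, idx S → d S = x S + y S) →
    ((∃ c : ℝ, 0 ≤ c ∧ ∀ S, idx S → x S = c * d S) ∧
     (∃ c : ℝ, 0 ≤ c ∧ ∀ S, idx S → y S = c * d S))

/-- The vertex-splitting of a function `d` on `(m+1)`-subsets of `V n` (splitting the
vertex `n` into vertices `n` and `n+1`): a function on `(m+1)`-subsets `S` of `V (n+1)`,
equal to `0` if `{n, n+1} ⊆ S`, to `d S` if `S ⊆ V n`, and to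
`d (insert n (S.erase (n+1)))` if `n+1 ∈ S` and `n ∉ S`. -/
def vertexSplitting (n : ℕ) (d : Finset ℕ → ℝ) (S : Finset ℕ) : ℝ :=
  if n ∈ S ∧ n + 1 ∈ S then 0
  else if S ⊆ V n then d S
  else d (insert n (S.erase (n + 1)))

/-!
Away from the vertex `n`, `d^{vs}` is `d` relabelled by the transposition `(n n+1)`; on a simplex
through both `n` and `n + 1` its only nonzero faces are the two opposite these vertices, and they
carry the same value. Hence `d^{vs}` is a hemi-metric.

If `d^{vs} = x + y` in `HMET^m_{n+1}`, nonnegativity forces `x` and `y` to vanish on every face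
containing `n` and `n + 1`. The two simplex inequalities of a simplex through both vertices then
make `x` take the same value on `S` and on `S` with `n + 1` replaced by `n`, so `x` is the
vertex-splitting of its restriction to `V n`. That restriction lies in `HMET^m_n` and is a multiple
of `d` by extremality, hence `x` is the same multiple of `d^{vs}`; likewise for `y`.
-/

open Finset

section Vertices

variable {n : ℕ} {S : Finset ℕ}

lemma mem_V {a : ℕ} : a ∈ V n ↔ 1 ≤ a ∧ a ≤ n := mem_Icc

lemma V_subset_V_succ (n : ℕ) : V n ⊆ V (n + 1) := Icc_subset_Icc le_rfl n.le_succ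

lemma subset_V_of_subset_V_succ (hS : S ⊆ V (n + 1)) (h : n + 1 ∉ S) : S ⊆ V n := fun a ha ↦
  have := mem_V.mp (hS ha)
  mem_V.mpr ⟨this.1, by grind⟩

lemma one_le_of_subset_V {m : ℕ} (hS : S ⊆ V n) (hcard : S.card = m + 1) : 1 ≤ n := by
  obtain ⟨a, ha⟩ := card_pos.mp (by omega : 0 < S.card)
  have := mem_V.mp (hS ha)
  omega

lemma map_swap_eq_insert_erase {a b : ℕ} (ha : a ∉ S) (hb : b ∈ S) :
    S.map (Equiv.swap a b).toEmbedding = insert a (S.erase b) := by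
  ext x
  simp only [mem_map_equiv, Equiv.symm_swap, Equiv.swap_apply_def, mem_insert, mem_erase]
  grind

lemma map_swap_subset_V (hn : 1 ≤ n) (hS : S ⊆ V (n + 1)) (h : n ∉ S) :
    S.map (Equiv.swap n (n + 1)).toEmbedding ⊆ V n := by
  intro a ha
  simp only [mem_map_equiv, Equiv.symm_swap, Equiv.swap_apply_def] at ha
  split_ifs at ha with h₁ h₂
  · exact mem_V.mpr ⟨by omega, by omega⟩
  · exact absurd ha h
  · have := mem_V.mp (hS ha)
    exact mem_V.mpr ⟨this.1, by omega⟩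

end Vertices

lemma sigmaT_map (f : Finset ℕ → ℝ) (e : ℕ ↪ ℕ) (T : Finset ℕ) :
    sigmaT (fun S ↦ f (S.map e)) T = sigmaT f (T.map e) := by
  simp only [sigmaT, sum_map, map_erase]

lemma inHMET.of_succ {m n : ℕ} {d : Finset ℕ → ℝ} (hd : inHMET m (n + 1) d) :
    inHMET m n d :=
  ⟨fun S hS ↦ hd.1 S (hS.trans (V_subset_V_succ n)),
    fun T hT ↦ hd.2 T (hT.trans (V_subset_V_succ n))⟩

section VertexSplitting

variable {m n : ℕ} {d : Finset ℕ → ℝ} {S : Finset ℕ}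

lemma vertexSplitting_of_mem_of_mem (h₀ : n ∈ S) (h₁ : n + 1 ∈ S) :
    vertexSplitting n d S = 0 := by
  simp [vertexSplitting, h₀, h₁]

lemma vertexSplitting_of_subset (h : S ⊆ V n) : vertexSplitting n d S = d S := by
  have : n + 1 ∉ S := fun h₁ ↦ by simpa [mem_V] using h h₁
  simp [vertexSplitting, this, h]

lemma vertexSplitting_of_notMem_of_mem (h₀ : n ∉ S) (h₁ : n + 1 ∈ S) :
    vertexSplitting n d S = d (insert n (S.erase (n + 1))) := by
  have : ¬ S ⊆ V n := fun h ↦ by simpa [mem_V] using h h₁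
  simp [vertexSplitting, h₀, this]

lemma vertexSplitting_of_notMem (hS : S ⊆ V (n + 1)) (h₀ : n ∉ S) :
    vertexSplitting n d S = d (S.map (Equiv.swap n (n + 1)).toEmbedding) := by
  by_cases h₁ : n + 1 ∈ S
  · rw [vertexSplitting_of_notMem_of_mem h₀ h₁, map_swap_eq_insert_erase h₀ h₁]
  · rw [vertexSplitting_of_subset (subset_V_of_subset_V_succ hS h₁), map_eq_of_subset]
    intro a ha
    simp only [mem_map_equiv, Equiv.symm_swap, Equiv.swap_apply_def] at ha
    grind

lemma vertexSplitting_mul (c : ℝ) :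
    vertexSplitting n (fun S ↦ c * d S) S = c * vertexSplitting n d S := by
  unfold vertexSplitting
  split_ifs <;> simp

lemma vertexSplitting_eq_zero_or_exists (hn : 1 ≤ n) (hS : S ⊆ V (n + 1)) :
    (∀ d : Finset ℕ → ℝ, vertexSplitting n d S = 0) ∨
      ∃ S' ⊆ V n, S'.card = S.card ∧
        ∀ d : Finset ℕ → ℝ, vertexSplitting n d S = d S' := by
  by_cases h₀ : n ∈ S
  · by_cases h₁ : n + 1 ∈ S
    · exact .inl fun d ↦ vertexSplitting_of_mem_of_mem h₀ h₁
    · exact .inr ⟨S, subset_V_of_subset_V_succ hS h₁, rfl,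
        fun d ↦ vertexSplitting_of_subset (subset_V_of_subset_V_succ hS h₁)⟩
  · exact .inr ⟨_, map_swap_subset_V hn hS h₀, card_map _,
      fun d ↦ vertexSplitting_of_notMem hS h₀⟩

lemma vertexSplitting_congr {x y : Finset ℕ → ℝ} (hn : 1 ≤ n)
    (hxy : ∀ S, S ⊆ V n ∧ S.card = m + 1 → x S = y S)
    (hS : S ⊆ V (n + 1)) (hcard : S.card = m + 1) :
    vertexSplitting n x S = vertexSplitting n y S := by
  rcases vertexSplitting_eq_zero_or_exists hn hS with h | ⟨S', hS', hcard', h⟩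
  · rw [h, h]
  · rw [h, h, hxy S' ⟨hS', hcard'.trans hcard⟩]

lemma vertexSplitting_nonneg (hn : 1 ≤ n) (hd : inHMET m n d) (hS : S ⊆ V (n + 1))
    (hcard : S.card = m + 1) : 0 ≤ vertexSplitting n d S := by
  rcases vertexSplitting_eq_zero_or_exists hn hS with h | ⟨S', hS', hcard', h⟩
  · rw [h]
  · rw [h]
    exact hd.1 S' hS' (hcard'.trans hcard)

lemma vertexSplitting_erase_eq_erase_succ {T : Finset ℕ} (h₀ : n ∈ T) (h₁ : n + 1 ∈ T)
    (hT : T ⊆ V (n + 1)) :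
    vertexSplitting n d (T.erase n) = vertexSplitting n d (T.erase (n + 1)) := by
  rw [vertexSplitting_of_notMem_of_mem (notMem_erase _ _) (mem_erase.mpr ⟨by omega, h₁⟩),
    erase_right_comm, insert_erase (mem_erase.mpr ⟨by omega, h₀⟩),
    vertexSplitting_of_subset
      (subset_V_of_subset_V_succ ((erase_subset _ _).trans hT) (notMem_erase _ _))]

lemma sigmaT_vertexSplitting_of_mem_of_mem {T : Finset ℕ} (h₀ : n ∈ T) (h₁ : n + 1 ∈ T)
    (hT : T ⊆ V (n + 1)) :
    sigmaT (vertexSplitting n d) T = 2 * vertexSplitting n d (T.erase (n + 1)) := by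
  rw [sigmaT, sum_eq_add_of_mem n (n + 1) h₀ h₁ (by omega),
    vertexSplitting_erase_eq_erase_succ h₀ h₁ hT, two_mul]
  rintro k hk ⟨hk₀, hk₁⟩
  exact vertexSplitting_of_mem_of_mem (mem_erase.mpr ⟨Ne.symm hk₀, h₀⟩)
    (mem_erase.mpr ⟨Ne.symm hk₁, h₁⟩)

lemma sigmaT_vertexSplitting_of_notMem {T : Finset ℕ} (hT : T ⊆ V (n + 1)) (h₀ : n ∉ T) :
    sigmaT (vertexSplitting n d) T = sigmaT d (T.map (Equiv.swap n (n + 1)).toEmbedding) := by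
  rw [← sigmaT_map]
  exact sum_congr rfl fun k _ ↦
    vertexSplitting_of_notMem ((erase_subset k T).trans hT) fun h ↦ h₀ (mem_of_mem_erase h)

lemma inHMET_vertexSplitting (hn : 1 ≤ n) (hd : inHMET m n d) :
    inHMET m (n + 1) (vertexSplitting n d) := by
  refine ⟨fun S ↦ vertexSplitting_nonneg hn hd, fun T hT hcard i hi ↦ ?_⟩
  by_cases h₀ : n ∈ T
  · by_cases h₁ : n + 1 ∈ T
    · have hT₁ : 0 ≤ vertexSplitting n d (T.erase (n + 1)) :=
        vertexSplitting_nonneg hn hd ((erase_subset _ _).trans hT)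
          (by rw [card_erase_of_mem h₁, hcard]; rfl)
      rw [sigmaT_vertexSplitting_of_mem_of_mem h₀ h₁ hT]
      obtain rfl | rfl | ⟨hi₀, hi₁⟩ : i = n ∨ i = n + 1 ∨ i ≠ n ∧ i ≠ n + 1 := by omega
      · rw [vertexSplitting_erase_eq_erase_succ h₀ h₁ hT]
      · rfl
      · rw [vertexSplitting_of_mem_of_mem (mem_erase.mpr ⟨Ne.symm hi₀, h₀⟩)
          (mem_erase.mpr ⟨Ne.symm hi₁, h₁⟩)]
        linarith
    · have hTn := subset_V_of_subset_V_succ hT h₁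
      have hT_erase (k : ℕ) : vertexSplitting n d (T.erase k) = d (T.erase k) :=
        vertexSplitting_of_subset ((erase_subset _ _).trans hTn)
      simp only [sigmaT, hT_erase]
      exact hd.2 T hTn hcard i hi
  · have hT_erase := vertexSplitting_of_notMem (d := d) ((erase_subset i T).trans hT)
      fun h ↦ h₀ (mem_of_mem_erase h)
    rw [sigmaT_vertexSplitting_of_notMem hT h₀, hT_erase, map_erase]
    exact hd.2 _ (map_swap_subset_V hn hT h₀) (by rw [card_map, hcard]) _ (mem_map_of_mem _ hi)

/-- The simplex inequalities of `insert a S` at `a` and at `b` are opposite. -/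
lemma inHMET.eq_insert_erase_of_vanishing {x : Finset ℕ → ℝ} (hx : inHMET m n x) {a b : ℕ}
    (ha : a ∈ V n) (hab : a ≠ b)
    (hz : ∀ S ⊆ V n, S.card = m + 1 → a ∈ S → b ∈ S → x S = 0)
    (hS : S ⊆ V n) (hcard : S.card = m + 1) (haS : a ∉ S) (hbS : b ∈ S) :
    x S = x (insert a (S.erase b)) := by
  set T := insert a S
  have haT : a ∈ T := mem_insert_self a S
  have hbT : b ∈ T := mem_insert_of_mem hbS
  have hT : T ⊆ V n := insert_subset ha hS
  have hTcard : T.card = m + 2 := by rw [card_insert_of_notMem haS, hcard]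
  have hsigma : sigmaT x T = x S + x (insert a (S.erase b)) := by
    rw [sigmaT, sum_eq_add_of_mem a b haT hbT hab, erase_insert haS,
      erase_insert_of_ne hab]
    rintro k hk ⟨hka, hkb⟩
    exact hz _ ((erase_subset k T).trans hT) (by rw [card_erase_of_mem hk, hTcard]; rfl)
      (mem_erase.mpr ⟨Ne.symm hka, haT⟩) (mem_erase.mpr ⟨Ne.symm hkb, hbT⟩)
  have hle_a := hx.2 T hT hTcard a haT
  have hle_b := hx.2 T hT hTcard b hbT
  rw [hsigma, erase_insert haS] at hle_a
  rw [hsigma, erase_insert_of_ne hab] at hle_b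
  linarith

lemma inHMET.eq_vertexSplitting {x : Finset ℕ → ℝ} (hn : 1 ≤ n) (hx : inHMET m (n + 1) x)
    (hz : ∀ S ⊆ V (n + 1), S.card = m + 1 → n ∈ S → n + 1 ∈ S → x S = 0)
    (hS : S ⊆ V (n + 1)) (hcard : S.card = m + 1) :
    x S = vertexSplitting n x S := by
  by_cases h₁ : n + 1 ∈ S
  · by_cases h₀ : n ∈ S
    · rw [vertexSplitting_of_mem_of_mem h₀ h₁, hz S hS hcard h₀ h₁]
    · rw [vertexSplitting_of_notMem_of_mem h₀ h₁]
      exact hx.eq_insert_erase_of_vanishing (mem_V.mpr ⟨hn, by omega⟩) (by omega) hz hS hcard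
        h₀ h₁
  · rw [vertexSplitting_of_subset (subset_V_of_subset_V_succ hS h₁)]

lemma inHMET.eq_mul_vertexSplitting {x : Finset ℕ → ℝ} {c : ℝ} (hn : 1 ≤ n)
    (hx : inHMET m (n + 1) x)
    (hz : ∀ S ⊆ V (n + 1), S.card = m + 1 → n ∈ S → n + 1 ∈ S → x S = 0)
    (hxd : ∀ S, S ⊆ V n ∧ S.card = m + 1 → x S = c * d S) :
    ∀ S, S ⊆ V (n + 1) ∧ S.card = m + 1 → x S = c * vertexSplitting n d S := by
  rintro S ⟨hS, hcard⟩
  rw [hx.eq_vertexSplitting hn hz hS hcard, vertexSplitting_congr hn hxd hS hcard,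
    vertexSplitting_mul]

end VertexSplitting

theorem vertexSplitting_extreme_general (m n : ℕ)
    (d : Finset ℕ → ℝ)
    (hd : IsExtremeRayOn (inHMET m n) (fun S => S ⊆ V n ∧ S.card = m + 1) d) :
    IsExtremeRayOn (inHMET m (n + 1))
      (fun S => S ⊆ V (n + 1) ∧ S.card = m + 1) (vertexSplitting n d) := by
  obtain ⟨hdC, ⟨S₀, ⟨hS₀, hS₀card⟩, hdS₀⟩, hd_extreme⟩ := hd
  have hn : 1 ≤ n := one_le_of_subset_V hS₀ hS₀card
  refine ⟨inHMET_vertexSplitting hn hdC, ⟨S₀, ⟨hS₀.trans (V_subset_V_succ n), hS₀card⟩, ?_⟩,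
    fun x y hx hy hxy ↦ ?_⟩
  · rwa [vertexSplitting_of_subset hS₀]
  have hz : ∀ S ⊆ V (n + 1), S.card = m + 1 → n ∈ S → n + 1 ∈ S → x S = 0 ∧ y S = 0 :=
    fun S hS hcard h₀ h₁ ↦ (add_eq_zero_iff_of_nonneg (hx.1 S hS hcard) (hy.1 S hS hcard)).mp
      ((hxy S ⟨hS, hcard⟩).symm.trans (vertexSplitting_of_mem_of_mem h₀ h₁))
  have hd_sum : ∀ S, S ⊆ V n ∧ S.card = m + 1 → d S = x S + y S := fun S ⟨hS, hcard⟩ ↦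
    (vertexSplitting_of_subset hS).symm.trans (hxy S ⟨hS.trans (V_subset_V_succ n), hcard⟩)
  obtain ⟨⟨c, hc, hxd⟩, ⟨c', hc', hyd⟩⟩ := hd_extreme x y hx.of_succ hy.of_succ hd_sum
  exact ⟨⟨c, hc, hx.eq_mul_vertexSplitting hn (fun S hS h h₀ h₁ ↦ (hz S hS h h₀ h₁).1) hxd⟩,
    ⟨c', hc', hy.eq_mul_vertexSplitting hn (fun S hS h h₀ h₁ ↦ (hz S hS h h₀ h₁).2) hyd⟩⟩

/-- Vertex-splitting of any extreme ray of `HMET m n` is an extreme ray of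
`HMET m (n+1)`. -/
theorem vertexSplitting_extreme (m n : ℕ) (hm : 1 ≤ m) (hn : m + 2 ≤ n)
    (d : Finset ℕ → ℝ)
    (hd : IsExtremeRayOn (inHMET m n) (fun S => S ⊆ V n ∧ S.card = m + 1) d) :
    IsExtremeRayOn (inHMET m (n + 1))
      (fun S => S ⊆ V (n + 1) ∧ S.card = m + 1) (vertexSplitting n d) :=
  vertexSplitting_extreme_general m n d hd
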